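/- Let G be a finite simple graph, r < s positive integers, k ≤ k' positive integers, 𝒮 a k-(r,s)-nucleus of G and 𝒮' a k'-(r,s)-nucleus of G such that 𝒮 ∩ 𝒮' ≠ ∅ (they share an s-clique). Then the union 𝒮 ∪ 𝒮' satisfies both nucleus conditions at level k: every R ∈ K_r(𝒮 ∪ 𝒮') has (𝒮 ∪ 𝒮')-degree at least k, and every two members of K_r(𝒮 ∪ 𝒮') are (𝒮 ∪ 𝒮')-connected. -/

import Mathlib

/-! Any `r`-subclique `R₀` of a shared `s`-clique lies in both `K_r(𝒮)` and `K_r(𝒮')`, so every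
member of `K_r(𝒮 ∪ 𝒮')` is connected to `R₀` inside one of the two nuclei. Degrees only grow
when passing to the union, and the `k'`-nucleus has degrees at least `k' ≥ k`. -/

variable {V : Type*} [Fintype V] [DecidableEq V]

/-- `𝒮` is a set of `s`-cliques of the graph `G`. -/
def CliqueSet (G : SimpleGraph V) (s : ℕ) (𝒮 : Finset (Finset V)) : Prop :=
  ∀ S ∈ 𝒮, G.IsNClique s S

/-- `R ∈ K_r(𝒮)`: `R` is an `r`-clique of `G` contained in some member of `𝒮`. -/
def InKr (G : SimpleGraph V) (r : ℕ) (𝒮 : Finset (Finset V)) (R : Finset V) : Prop :=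
  G.IsNClique r R ∧ ∃ S ∈ 𝒮, R ⊆ S

/-- The `𝒮`-degree of `R`: the number of members of `𝒮` containing `R`. -/
def SDeg (𝒮 : Finset (Finset V)) (R : Finset V) : ℕ :=
  (𝒮.filter fun S => R ⊆ S).card

/-- One step of `𝒮`-connectivity: both `R` and `R'` are in `K_r(𝒮)` and some member
of `𝒮` contains `R ∪ R'`. -/
def Step (G : SimpleGraph V) (r : ℕ) (𝒮 : Finset (Finset V)) (R R' : Finset V) : Prop :=
  InKr G r 𝒮 R ∧ InKr G r 𝒮 R' ∧ ∃ S ∈ 𝒮, R ∪ R' ⊆ S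

/-- `R` and `R'` are `𝒮`-connected: there is a sequence of members of `K_r(𝒮)` from `R`
to `R'` in which each consecutive pair is contained in a common member of `𝒮`. -/
def SConnected (G : SimpleGraph V) (r : ℕ) (𝒮 : Finset (Finset V)) (R R' : Finset V) : Prop :=
  Relation.ReflTransGen (Step G r 𝒮) R R'

/-- The degree condition at level `k`: every `R ∈ K_r(𝒮)` has `𝒮`-degree at least `k`. -/
def DegCond (G : SimpleGraph V) (r k : ℕ) (𝒮 : Finset (Finset V)) : Prop :=
  ∀ R, InKr G r 𝒮 R → k ≤ SDeg 𝒮 R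

/-- The connectivity condition: every two members of `K_r(𝒮)` are `𝒮`-connected. -/
def ConnCond (G : SimpleGraph V) (r : ℕ) (𝒮 : Finset (Finset V)) : Prop :=
  ∀ R R', InKr G r 𝒮 R → InKr G r 𝒮 R' → SConnected G r 𝒮 R R'

/-- `𝒮` satisfies all the (non-maximality) conditions of a `k`-`(r,s)`-nucleus. -/
def NucleusPre (G : SimpleGraph V) (r s k : ℕ) (𝒮 : Finset (Finset V)) : Prop :=
  CliqueSet G s 𝒮 ∧ DegCond G r k 𝒮 ∧ ConnCond G r 𝒮

/-- `𝒮` is a `k`-`(r,s)`-nucleus of `G`: a set of `s`-cliques, maximal under inclusion,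
satisfying the degree condition at level `k` and the connectivity condition. -/
def IsNucleus (G : SimpleGraph V) (r s k : ℕ) (𝒮 : Finset (Finset V)) : Prop :=
  NucleusPre G r s k 𝒮 ∧ ∀ 𝒯, NucleusPre G r s k 𝒯 → 𝒮 ⊆ 𝒯 → 𝒯 = 𝒮

theorem SimpleGraph.IsNClique.exists_subset_isNClique {α : Type*} {G : SimpleGraph α}
    {n m : ℕ} {S : Finset α} (hS : G.IsNClique n S) (hmn : m ≤ n) :
    ∃ R ⊆ S, G.IsNClique m R := by
  obtain ⟨R, hRS, hR⟩ := Finset.exists_subset_card_eq (hmn.trans hS.card_eq.ge)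
  exact ⟨R, hRS, hS.isClique.subset hRS, hR⟩

section
omit [Fintype V]
variable {G : SimpleGraph V} {r k k' : ℕ} {𝒮 𝒮' 𝒯 : Finset (Finset V)} {R R' : Finset V}

omit [DecidableEq V] in
theorem InKr.mono (h : 𝒮 ⊆ 𝒯) (hR : InKr G r 𝒮 R) : InKr G r 𝒯 R :=
  ⟨hR.1, hR.2.imp fun _ ⟨hS, hRS⟩ => ⟨h hS, hRS⟩⟩

theorem inKr_union : InKr G r (𝒮 ∪ 𝒮') R ↔ InKr G r 𝒮 R ∨ InKr G r 𝒮' R := by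
  simp only [InKr, Finset.mem_union, or_and_right, exists_or, and_or_left]

theorem Step.mono (h : 𝒮 ⊆ 𝒯) (hR : Step G r 𝒮 R R') : Step G r 𝒯 R R' :=
  ⟨hR.1.mono h, hR.2.1.mono h, hR.2.2.imp fun _ ⟨hS, hRS⟩ => ⟨h hS, hRS⟩⟩

theorem Step.symm (hR : Step G r 𝒮 R R') : Step G r 𝒮 R' R :=
  ⟨hR.2.1, hR.1, Finset.union_comm R R' ▸ hR.2.2⟩

theorem SConnected.mono (h : 𝒮 ⊆ 𝒯) (hR : SConnected G r 𝒮 R R') : SConnected G r 𝒯 R R' :=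
  Relation.ReflTransGen.mono (fun _ _ => Step.mono h) _ _ hR

theorem SConnected.symm (hR : SConnected G r 𝒮 R R') : SConnected G r 𝒮 R' R :=
  Relation.ReflTransGen.mono (fun _ _ => Step.symm) _ _ (Relation.reflTransGen_swap.2 hR)

theorem SConnected.trans {R'' : Finset V} (h₁ : SConnected G r 𝒮 R R')
    (h₂ : SConnected G r 𝒮 R' R'') : SConnected G r 𝒮 R R'' :=
  Relation.ReflTransGen.trans h₁ h₂

theorem sDeg_mono (h : 𝒮 ⊆ 𝒯) (R : Finset V) : SDeg 𝒮 R ≤ SDeg 𝒯 R :=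
  Finset.card_le_card (Finset.filter_subset_filter _ h)

theorem DegCond.of_le (hkk' : k ≤ k') (h : DegCond G r k' 𝒮) : DegCond G r k 𝒮 :=
  fun R hR => hkk'.trans (h R hR)

theorem DegCond.union (h : DegCond G r k 𝒮) (h' : DegCond G r k 𝒮') :
    DegCond G r k (𝒮 ∪ 𝒮') := by
  intro R hR
  rcases inKr_union.1 hR with hR | hR
  · exact (h R hR).trans (sDeg_mono Finset.subset_union_left R)
  · exact (h' R hR).trans (sDeg_mono Finset.subset_union_right R)

theorem ConnCond.union {R₀ : Finset V} (h : ConnCond G r 𝒮) (h' : ConnCond G r 𝒮')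
    (hR₀ : InKr G r 𝒮 R₀) (hR₀' : InKr G r 𝒮' R₀) : ConnCond G r (𝒮 ∪ 𝒮') := by
  have to_R₀ : ∀ R, InKr G r (𝒮 ∪ 𝒮') R → SConnected G r (𝒮 ∪ 𝒮') R R₀ := by
    intro R hR
    rcases inKr_union.1 hR with hR | hR
    · exact (h R R₀ hR hR₀).mono Finset.subset_union_left
    · exact (h' R R₀ hR hR₀').mono Finset.subset_union_right
  exact fun R R' hR hR' => (to_R₀ R hR).trans (to_R₀ R' hR').symm

end

theorem union_satisfies_nucleus_conditions_general (G : SimpleGraph V) (r s k k' : ℕ)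
    (hrs : r < s) (hkk' : k ≤ k')
    (𝒮 𝒮' : Finset (Finset V))
    (hS : IsNucleus G r s k 𝒮) (hS' : IsNucleus G r s k' 𝒮')
    (hmeet : (𝒮 ∩ 𝒮').Nonempty) :
    DegCond G r k (𝒮 ∪ 𝒮') ∧ ConnCond G r (𝒮 ∪ 𝒮') := by
  obtain ⟨⟨hclique, hdeg, hconn⟩, -⟩ := hS
  obtain ⟨⟨-, hdeg', hconn'⟩, -⟩ := hS'
  obtain ⟨S₀, hS₀⟩ := hmeet
  rw [Finset.mem_inter] at hS₀
  obtain ⟨R₀, hR₀S₀, hR₀⟩ := (hclique S₀ hS₀.1).exists_subset_isNClique hrs.le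
  exact ⟨hdeg.union (hdeg'.of_le hkk'),
    hconn.union hconn' ⟨hR₀, S₀, hS₀.1, hR₀S₀⟩ ⟨hR₀, S₀, hS₀.2, hR₀S₀⟩⟩

/-- If a `k`-nucleus and a `k'`-nucleus (`k ≤ k'`) share an `s`-clique, then
their union satisfies both nucleus conditions at level `k`. -/
theorem union_satisfies_nucleus_conditions (G : SimpleGraph V) (r s k k' : ℕ)
    (hr : 0 < r) (hrs : r < s) (hk : 0 < k) (hkk' : k ≤ k')
    (𝒮 𝒮' : Finset (Finset V))
    (hS : IsNucleus G r s k 𝒮) (hS' : IsNucleus G r s k' 𝒮')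
    (hmeet : (𝒮 ∩ 𝒮').Nonempty) :
    DegCond G r k (𝒮 ∪ 𝒮') ∧ ConnCond G r (𝒮 ∪ 𝒮') :=
  union_satisfies_nucleus_conditions_general G r s k k' hrs hkk' 𝒮 𝒮' hS hS' hmeet
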